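/- Let Λ ⊆ ℝ^n be a lattice and Φ an expanding injective endomorphism of ℝ^n with Φ(Λ) ⊆ Λ. Let w_0 be a positive integer such that |λ| > 2^{1/w_0} for all eigenvalues λ of Φ, and let ‖·‖ be a vector norm whose induced operator norm satisfies ‖Φ^{−1}‖ < 2^{−1/w_0}. Let V = {z ∈ ℝ^n : ‖z‖ ≤ ‖z + α‖ for all α ∈ Λ} be the Voronoi cell of the origin. For w ≥ w_0, let D• ⊆ {α ∈ Λ : Φ^{−w}(α) ∈ V} be a set of representatives of the residue classes of Λ mod Φ^w(Λ) not contained in Φ(Λ), and D = D• ∪ {0} (a minimal norm digit set modulo Φ^w). Then D is a w-NADS: every element of Λ has a D-w-NAF expansion. -/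

import Mathlib

/-!
Digit extraction terminates because it strictly decreases the norm on the lattice, whose balls
are finite. If `β ∈ Φ(Λ)`, the next digit is `0` and `Φ⁻¹ β` is shorter than `β` since
`‖Φ⁻¹‖ < 1`. Otherwise `β = δ + Φʷ γ` for the digit `δ ∈ D•` of `β`; since `Φ⁻ʷ δ` lies in the
Voronoi cell, `‖Φ⁻ʷ δ‖ ≤ ‖Φ⁻ʷ δ + γ‖ = ‖Φ⁻ʷ β‖`, hence `‖γ‖ ≤ 2 ‖Φ⁻ʷ β‖ ≤ 2 ‖Φ⁻¹‖ʷ ‖β‖ < ‖β‖`,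
and `δ` is followed by `w - 1` zeros.
-/

open Function Set

section Expansion

variable {R M : Type*} [Semiring R] [AddCommMonoid M] [Module R M]

/-- The list `[η₀, η₁, …]` encodes `∑ j, f^j η_j`. -/
def digitExpansion (f : Module.End R M) (l : List M) : M :=
  l.foldr (fun d r => d + f r) 0

@[simp]
lemma digitExpansion_nil (f : Module.End R M) : digitExpansion f [] = 0 := rfl

@[simp]
lemma digitExpansion_cons (f : Module.End R M) (d : M) (l : List M) :
    digitExpansion f (d :: l) = d + f (digitExpansion f l) := rfl

lemma digitExpansion_replicate_zero_append (f : Module.End R M) (k : ℕ) (l : List M) :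
    digitExpansion f (List.replicate k 0 ++ l) = (f ^ k) (digitExpansion f l) := by
  induction k with
  | zero => simp
  | succ k ih => simp [List.replicate_succ, ih, pow_succ']

lemma sum_pow_apply_getD_eq_digitExpansion (f : Module.End R M) (l : List M) :
    ∑ j : Fin l.length, (f ^ (j : ℕ)) (l.getD j 0) = digitExpansion f l := by
  induction l with
  | nil => simp
  | cons d l ih =>
    rw [List.length_cons, Fin.sum_univ_succ, digitExpansion_cons, ← ih, map_sum]
    simp [pow_succ']

end Expansion

section NAF

variable {M : Type*}

def IsWNAF [Zero M] (w : ℕ) (l : List M) : Prop :=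
  ∀ i j : ℕ, i < j → j < i + w → l.getD i 0 ≠ 0 → l.getD j 0 = 0

namespace IsWNAF

variable [Zero M] {w : ℕ} {l : List M}

lemma nil : IsWNAF w ([] : List M) := fun _ _ _ _ h => (h (by simp)).elim

lemma cons_zero (hl : IsWNAF w l) : IsWNAF w (0 :: l) := by
  rintro (_ | i) (_ | j) hij hjw hi
  · simp at hi
  · simp at hi
  · omega
  · exact hl i j (by omega) (by omega) hi

lemma cons_replicate_zero_append (hl : IsWNAF w l) (d : M) :
    IsWNAF w (d :: (List.replicate (w - 1) 0 ++ l)) := by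
  have getD_pad (i : ℕ) : (List.replicate (w - 1) (0 : M) ++ l).getD i 0 =
      if i < w - 1 then 0 else l.getD (i - (w - 1)) 0 := by
    split_ifs with h
    · rw [List.getD_append _ _ _ _ (by simpa using h)]
      simp
    · rw [List.getD_append_right _ _ _ _ (by simpa using h), List.length_replicate]
  rintro i (_ | j) hij hjw hi
  · omega
  rw [List.getD_cons_succ, getD_pad]
  split_ifs with hj
  · rfl
  obtain _ | i := i
  · omega
  rw [List.getD_cons_succ, getD_pad] at hi
  split_ifs at hi with hi'
  · exact (hi rfl).elim
  exact hl _ _ (by omega) (by omega) hi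

end IsWNAF

variable [AddCommMonoid M] {R : Type*} [Semiring R] [Module R M]

def HasWNAF (f : Module.End R M) (D : Set M) (w : ℕ) (x : M) : Prop :=
  ∃ l : List M, (∀ d ∈ l, d ∈ insert 0 D) ∧ IsWNAF w l ∧ digitExpansion f l = x

namespace HasWNAF

variable {f : Module.End R M} {D : Set M} {w : ℕ} {x : M}

lemma zero : HasWNAF f D w 0 := ⟨[], by simp, .nil, rfl⟩

lemma apply (hx : HasWNAF f D w x) : HasWNAF f D w (f x) := by
  obtain ⟨l, hD, hl, rfl⟩ := hx
  refine ⟨0 :: l, ?_, hl.cons_zero, by simp⟩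
  simpa using hD

lemma digit_add (hx : HasWNAF f D w x) {δ : M} (hδ : δ ∈ D) (hw : 1 ≤ w) :
    HasWNAF f D w (δ + (f ^ w) x) := by
  obtain ⟨l, hD, hl, rfl⟩ := hx
  refine ⟨δ :: (List.replicate (w - 1) 0 ++ l), ?_, hl.cons_replicate_zero_append δ, ?_⟩
  · simp only [List.mem_cons, List.mem_append, List.mem_replicate]
    rintro d (rfl | ⟨-, rfl⟩ | hd)
    exacts [Set.mem_insert_of_mem _ hδ, Set.mem_insert _ _, hD d hd]
  · rw [digitExpansion_cons, digitExpansion_replicate_zero_append, ← Module.End.mul_apply,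
      ← pow_succ', Nat.sub_add_cancel hw]

lemma exists_fin (hx : HasWNAF f D w x) :
    ∃ (ℓ : ℕ) (η : Fin ℓ → M), (∀ j, η j ∈ insert 0 D) ∧
      (∀ i j : Fin ℓ, (i : ℕ) < j → (j : ℕ) < i + w → η i ≠ 0 → η j = 0) ∧
      ∑ j : Fin ℓ, (f ^ (j : ℕ)) (η j) = x := by
  obtain ⟨l, hD, hl, rfl⟩ := hx
  refine ⟨l.length, fun j => l.getD j 0, fun j => ?_, fun i j => hl i j,
    sum_pow_apply_getD_eq_digitExpansion f l⟩
  dsimp only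
  rw [List.getD_eq_getElem _ _ j.isLt]
  exact hD _ (List.getElem_mem _)

end HasWNAF

end NAF

theorem induction_of_finite_sublevels {α : Type*} {S : Set α} {f : α → ℝ}
    (hfin : ∀ r, {x ∈ S | f x ≤ r}.Finite) {P : α → Prop}
    (step : ∀ β ∈ S, (∀ γ ∈ S, f γ < f β → P γ) → P β) : ∀ β ∈ S, P β := by
  suffices ∀ N : ℕ, ∀ β ∈ S, {x ∈ S | f x ≤ f β}.ncard = N → P β from
    fun β hβ => this _ β hβ rfl
  intro N
  induction N using Nat.strong_induction_on with
  | _ N ih =>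
    rintro β hβ rfl
    refine step β hβ fun γ hγ hlt => ih _ ?_ γ hγ rfl
    refine Set.ncard_lt_ncard ⟨fun x hx => ⟨hx.1, hx.2.trans hlt.le⟩, fun hsub => ?_⟩ (hfin _)
    exact (hsub ⟨hβ, le_rfl⟩).2.not_gt hlt

section Norm

variable {E : Type*} [NormedAddCommGroup E]

lemma norm_iterate_le {g : E → E} {c : ℝ} (hg : ∀ x, ‖g x‖ ≤ c * ‖x‖) (hc : 0 ≤ c)
    (k : ℕ) (x : E) : ‖g^[k] x‖ ≤ c ^ k * ‖x‖ := by
  induction k with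
  | zero => simp
  | succ k ih =>
    rw [iterate_succ_apply', pow_succ', mul_assoc]
    exact (hg _).trans (mul_le_mul_of_nonneg_left ih hc)

variable [NormedSpace ℝ E]

lemma finite_span_int_basis_norm_le [ProperSpace E] {ι : Type*} [Finite ι]
    (b : Module.Basis ι ℝ E) (r : ℝ) :
    {x ∈ (Submodule.span ℤ (range b) : Set E) | ‖x‖ ≤ r}.Finite :=
  (ZSpan.setFinite_inter b Metric.isBounded_closedBall).subset
    fun _ hx => ⟨mem_closedBall_zero_iff.2 hx.2, hx.1⟩

lemma norm_symm_pow_apply_le {Φ : E ≃ₗ[ℝ] E} {c : ℝ} (hΦ : ∀ x, ‖Φ.symm x‖ ≤ c * ‖x‖)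
    (hc : 0 ≤ c) (k : ℕ) (x : E) : ‖(Φ ^ k).symm x‖ ≤ c ^ k * ‖x‖ := by
  change ‖(Φ ^ k)⁻¹ x‖ ≤ _
  rw [← inv_pow, LinearEquiv.coe_pow]
  exact norm_iterate_le hΦ hc k x

lemma norm_le_two_mul_of_voronoi {Ψ : E ≃ₗ[ℝ] E} {c : ℝ} (hΨ : ∀ x, ‖Ψ.symm x‖ ≤ c * ‖x‖)
    {β δ γ : E} (hγ : Ψ γ = β - δ) (hδ : ‖Ψ.symm δ‖ ≤ ‖Ψ.symm δ + γ‖) :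
    ‖γ‖ ≤ 2 * c * ‖β‖ := by
  have hsum : Ψ.symm δ + γ = Ψ.symm β := by
    rw [← Ψ.symm_apply_apply γ, hγ, ← map_add, add_sub_cancel]
  rw [hsum] at hδ
  calc ‖γ‖ = ‖Ψ.symm β - Ψ.symm δ‖ := by rw [← hsum, add_sub_cancel_left]
    _ ≤ ‖Ψ.symm β‖ + ‖Ψ.symm δ‖ := norm_sub_le _ _
    _ ≤ 2 * c * ‖β‖ := by linarith [hΨ β]

end Norm

lemma two_mul_pow_lt_one {w₀ w : ℕ} (hw₀ : 1 ≤ w₀) (hw : w₀ ≤ w) {q : ℝ} (hq0 : 0 ≤ q)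
    (hq : q < ((2 : ℝ) ^ ((1 : ℝ) / w₀))⁻¹) : 2 * q ^ w < 1 := by
  have hroot : ((2 : ℝ) ^ ((1 : ℝ) / w₀)) ^ w₀ = 2 := by
    rw [← Real.rpow_natCast, ← Real.rpow_mul zero_le_two, one_div,
      inv_mul_cancel₀ (by positivity), Real.rpow_one]
  have hq1 : q < 1 := hq.trans_le <| inv_le_one_of_one_le₀ <|
    Real.one_le_rpow one_le_two (by positivity)
  have hqw₀ : q ^ w₀ < 2⁻¹ := by
    simpa only [inv_pow, hroot] using pow_lt_pow_left₀ hq hq0 (show w₀ ≠ 0 by omega)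
  have := pow_le_pow_of_le_one hq0 hq1.le hw
  linarith

theorem minimal_norm_digit_set_wNADS_general
    {E : Type*} [NormedAddCommGroup E] [NormedSpace ℝ E] [FiniteDimensional ℝ E]
    {n : ℕ} (b : Module.Basis (Fin n) ℝ E)
    (Λ : Set E) (hΛ : Λ = ↑(Submodule.span ℤ (Set.range ⇑b)))
    (Φ : E ≃ₗ[ℝ] E)
    (w₀ : ℕ) (hw₀ : 1 ≤ w₀)
    (q : ℝ) (hq : q = ‖LinearMap.toContinuousLinearMap (Φ.symm : E →ₗ[ℝ] E)‖)
    (hq1 : q < ((2 : ℝ) ^ ((1 : ℝ) / w₀))⁻¹)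
    (V : Set E) (hV : V = {z : E | ∀ α ∈ Λ, ‖z‖ ≤ ‖z + α‖})
    (w : ℕ) (hw : w₀ ≤ w)
    (Dbul : Set E)
    (hDV : Dbul ⊆ {α ∈ Λ | (Φ ^ w).symm α ∈ V})
    (hDrep : ∀ α ∈ Λ, α ∉ ⇑Φ '' Λ →
      ∃! δ, δ ∈ Dbul ∧ α - δ ∈ ⇑(Φ ^ w) '' Λ) :
    ∀ α ∈ Λ, ∃ (ℓ : ℕ) (η : Fin ℓ → E),
      (∀ j, η j ∈ insert (0 : E) Dbul) ∧
      (∀ i j : Fin ℓ, (i : ℕ) < (j : ℕ) → (j : ℕ) < (i : ℕ) + w → η i ≠ 0 → η j = 0) ∧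
      (∑ j : Fin ℓ, ((Φ : E →ₗ[ℝ] E) ^ (j : ℕ)) (η j)) = α := by
  subst hV
  have hq0 : 0 ≤ q := hq ▸ norm_nonneg _
  have hqw : 2 * q ^ w < 1 := two_mul_pow_lt_one hw₀ hw hq0 hq1
  have hq_lt_one : q < 1 := (pow_lt_one_iff_of_nonneg hq0 (show w ≠ 0 by omega)).mp (by linarith)
  have hΦinv (x : E) : ‖Φ.symm x‖ ≤ q * ‖x‖ := hq ▸ (LinearMap.toContinuousLinearMap _).le_opNorm x
  have hfin (r : ℝ) : {x ∈ Λ | ‖x‖ ≤ r}.Finite := hΛ ▸ finite_span_int_basis_norm_le b r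
  refine fun α hα => HasWNAF.exists_fin (f := (Φ : E →ₗ[ℝ] E)) ?_
  refine induction_of_finite_sublevels hfin (fun β hβ ih => ?_) α hα
  obtain rfl | hβ0 := eq_or_ne β 0
  · exact .zero
  have hβpos : 0 < ‖β‖ := norm_pos_iff.2 hβ0
  by_cases hβΦ : β ∈ Φ '' Λ
  · obtain ⟨γ, hγ, rfl⟩ := hβΦ
    refine (ih γ hγ ?_).apply
    calc ‖γ‖ = ‖Φ.symm (Φ γ)‖ := by rw [Φ.symm_apply_apply]
      _ ≤ q * ‖Φ γ‖ := hΦinv _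
      _ < ‖Φ γ‖ := mul_lt_of_lt_one_left hβpos hq_lt_one
  · obtain ⟨δ, ⟨hδ, γ, hγ, hγβ⟩, -⟩ := hDrep β hβ hβΦ
    have hlt : ‖γ‖ < ‖β‖ := calc
      ‖γ‖ ≤ 2 * q ^ w * ‖β‖ :=
        norm_le_two_mul_of_voronoi (norm_symm_pow_apply_le hΦinv hq0 w) hγβ ((hDV hδ).2 γ hγ)
      _ < ‖β‖ := mul_lt_of_lt_one_left hβpos hqw
    have := (ih γ hγ hlt).digit_add hδ (hw₀.trans hw)
    rwa [Module.End.coe_pow, LinearEquiv.coe_toLinearMap, ← LinearEquiv.coe_pow, hγβ,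
      add_sub_cancel] at this

/-- Theorem 5.2: a minimal norm digit set modulo `Φ^w` (digits chosen with
`Φ^{-w}`-image in the Voronoi cell of the origin) is a `w`-NADS for every
`w ≥ w₀`, where `|λ| > 2^{1/w₀}` for all eigenvalues `λ` of `Φ` and
`‖Φ⁻¹‖ < 2^{-1/w₀}`. -/
theorem minimal_norm_digit_set_wNADS
    {E : Type*} [NormedAddCommGroup E] [NormedSpace ℝ E] [FiniteDimensional ℝ E]
    {n : ℕ} (b : Module.Basis (Fin n) ℝ E)
    (Λ : Set E) (hΛ : Λ = ↑(Submodule.span ℤ (Set.range ⇑b)))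
    (Φ : E ≃ₗ[ℝ] E) (hΦΛ : ∀ x ∈ Λ, Φ x ∈ Λ)
    (w₀ : ℕ) (hw₀ : 1 ≤ w₀)
    (hexp : ∀ lam : ℂ,
      (Polynomial.map (algebraMap ℝ ℂ) (LinearMap.charpoly (Φ : E →ₗ[ℝ] E))).IsRoot lam →
      (2 : ℝ) ^ ((1 : ℝ) / w₀) < ‖lam‖)
    (q : ℝ) (hq : q = ‖LinearMap.toContinuousLinearMap (Φ.symm : E →ₗ[ℝ] E)‖)
    (hq1 : q < ((2 : ℝ) ^ ((1 : ℝ) / w₀))⁻¹)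
    (V : Set E) (hV : V = {z : E | ∀ α ∈ Λ, ‖z‖ ≤ ‖z + α‖})
    (w : ℕ) (hw : w₀ ≤ w)
    (Dbul : Set E)
    (hDV : Dbul ⊆ {α ∈ Λ | (Φ ^ w).symm α ∈ V})
    (hDnot : ∀ δ ∈ Dbul, δ ∉ ⇑Φ '' Λ)
    (hDrep : ∀ α ∈ Λ, α ∉ ⇑Φ '' Λ →
      ∃! δ, δ ∈ Dbul ∧ α - δ ∈ ⇑(Φ ^ w) '' Λ) :
    ∀ α ∈ Λ, ∃ (ℓ : ℕ) (η : Fin ℓ → E),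
      (∀ j, η j ∈ insert (0 : E) Dbul) ∧
      (∀ i j : Fin ℓ, (i : ℕ) < (j : ℕ) → (j : ℕ) < (i : ℕ) + w → η i ≠ 0 → η j = 0) ∧
      (∑ j : Fin ℓ, ((Φ : E →ₗ[ℝ] E) ^ (j : ℕ)) (η j)) = α :=
  minimal_norm_digit_set_wNADS_general b Λ hΛ Φ w₀ hw₀ q hq hq1 V hV w hw Dbul hDV hDrep
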